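/- (Tightness of the semidefinite relaxation.) In the secure-delivery setup, suppose there exists an R1-feasible family (W*_ρ)_{ρ∈S} with rank(W*_ρ) ≤ 1 for all ρ that is optimal for R1, i.e., Σ_{ρ∈S} tr(W*_ρ) ≤ Σ_{ρ∈S} tr(W_ρ) for every R1-feasible family (W_ρ). Then the set of R0-feasible families is nonempty and the infimum of Σ_{ρ∈S} ‖w_ρ‖² over R0-feasible families (w_ρ) equals Σ_{ρ∈S} tr(W*_ρ), which is the infimum of Σ_{ρ∈S} tr(W_ρ) over R1-feasible families. -/

import Mathlib

/-!
A PSD matrix of rank at most one is `w wᴴ` (spectral theorem). On matrices of this form every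
R1 constraint is equivalent to the R0 constraint it relaxes: `tr (A w wᴴ) = wᴴ A w`, and for the
secrecy constraint, with `u = Gᴴ w`, the matrix determinant lemma gives
`det (1 + c u uᴴ) = 1 + c ‖u‖²`, while `r I - u uᴴ ⪰ 0 ↔ ‖u‖² ≤ r` by Cauchy–Schwarz.
Since also `tr (w wᴴ) = ‖w‖²`, the map `w ↦ (w_ρ w_ρᴴ)_ρ` embeds R0 into R1 preserving the
objective, and the rank-one R1 optimum comes from an R0-feasible family attaining the R1 bound.
-/

open Matrix ComplexOrder Finset

def outerProd {n : ℕ} (w : Fin n → ℂ) : Matrix (Fin n) (Fin n) ℂ :=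
  Matrix.vecMulVec w (star w)

/-- R0-feasibility of a family of beamforming vectors `(w_ρ)_{ρ ∈ S}`:
per-BS big-M power constraints C4, per-BS power constraints C5, the QoS
constraints C6 in affine form, and the secrecy constraints C7. -/
def R0Feasible {n Ne : ℕ} {M S : Type*} [Fintype M] [Fintype S] [DecidableEq S]
    (Λ : M → Matrix (Fin n) (Fin n) ℂ) (P : M → ℝ) (q : M → S → ℝ)
    (hch : S → Fin n → ℂ) (G : Matrix (Fin n) (Fin Ne) ℂ)
    (σ2 σe2 : ℝ) (κreq κtol : S → ℝ) (w : S → Fin n → ℂ) : Prop :=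
  (∀ m ρ, (star (w ρ) ⬝ᵥ (Λ m) *ᵥ (w ρ)).re ≤ q m ρ * P m) ∧
  (∀ m, ∑ ρ : S, (star (w ρ) ⬝ᵥ (Λ m) *ᵥ (w ρ)).re ≤ P m) ∧
  (∀ ρ : S, σ2 + ∑ ρ' ∈ Finset.univ.erase ρ, ‖star (hch ρ) ⬝ᵥ w ρ'‖ ^ 2
      ≤ (κreq ρ)⁻¹ * ‖star (hch ρ) ⬝ᵥ w ρ‖ ^ 2) ∧
  (∀ ρ : S, ((1 : Matrix (Fin Ne) (Fin Ne) ℂ)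
      + ((σe2⁻¹ : ℝ) : ℂ) • (Gᴴ * outerProd (w ρ) * G)).det
        ≤ ((1 + κtol ρ : ℝ) : ℂ))

/-- R1-feasibility of a family of PSD matrices `(W_ρ)_{ρ ∈ S}`: the SDP
relaxation of R0 with constraints C4–C7 rewritten linearly in `W_ρ`. -/
def R1Feasible {n Ne : ℕ} {M S : Type*} [Fintype M] [Fintype S] [DecidableEq S]
    (Λ : M → Matrix (Fin n) (Fin n) ℂ) (P : M → ℝ) (q : M → S → ℝ)
    (hch : S → Fin n → ℂ) (G : Matrix (Fin n) (Fin Ne) ℂ)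
    (σ2 σe2 : ℝ) (κreq κtol : S → ℝ) (W : S → Matrix (Fin n) (Fin n) ℂ) : Prop :=
  (∀ ρ : S, (W ρ).PosSemidef) ∧
  (∀ m ρ, ((Λ m * W ρ).trace).re ≤ q m ρ * P m) ∧
  (∀ m, ∑ ρ : S, ((Λ m * W ρ).trace).re ≤ P m) ∧
  (∀ ρ : S, σ2 + ∑ ρ' ∈ Finset.univ.erase ρ, ((W ρ' * outerProd (hch ρ)).trace).re
      ≤ (κreq ρ)⁻¹ * ((W ρ * outerProd (hch ρ)).trace).re) ∧
  (∀ ρ : S, (((σe2 * κtol ρ : ℝ) : ℂ) • (1 : Matrix (Fin Ne) (Fin Ne) ℂ)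
      - Gᴴ * W ρ * G).PosSemidef)

namespace Matrix

variable {m n R 𝕜 : Type*} [Fintype n]

theorem trace_mul_vecMulVec [CommSemiring R] (A : Matrix n n R) (x y : n → R) :
    (A * vecMulVec x y).trace = y ⬝ᵥ A *ᵥ x := by
  rw [mul_vecMulVec, trace_vecMulVec, dotProduct_comm]

theorem dotProduct_vecMulVec_mulVec [CommSemiring R] (a b c d : n → R) :
    a ⬝ᵥ vecMulVec b c *ᵥ d = (a ⬝ᵥ b) * (c ⬝ᵥ d) := by
  rw [dotProduct_mulVec, vecMul_vecMulVec, smul_dotProduct, smul_eq_mul]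

theorem det_one_add_vecMulVec [CommRing R] [DecidableEq n] (u v : n → R) :
    (1 + vecMulVec u v).det = 1 + v ⬝ᵥ u := by
  rw [vecMulVec_eq Unit, det_one_add_replicateCol_mul_replicateRow]

theorem mul_vecMulVec_star_mul_conjTranspose [CommSemiring R] [StarRing R]
    (B : Matrix m n R) (x : n → R) :
    B * vecMulVec x (star x) * Bᴴ = vecMulVec (B *ᵥ x) (star (B *ᵥ x)) := by
  rw [mul_vecMulVec, vecMulVec_mul, star_mulVec]

variable [RCLike 𝕜]

theorem star_dotProduct_self_eq_sum_norm_sq (u : n → 𝕜) :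
    star u ⬝ᵥ u = ((∑ i, ‖u i‖ ^ 2 : ℝ) : 𝕜) := by
  simp only [dotProduct, Pi.star_apply, RCLike.star_def, RCLike.ofReal_sum, RCLike.ofReal_pow]
  exact Finset.sum_congr rfl fun i _ => by rw [mul_comm, RCLike.mul_conj]

theorem trace_vecMulVec_star (u : n → 𝕜) :
    (vecMulVec u (star u)).trace = ((∑ i, ‖u i‖ ^ 2 : ℝ) : 𝕜) := by
  rw [trace_vecMulVec, dotProduct_comm, star_dotProduct_self_eq_sum_norm_sq]

theorem star_dotProduct_vecMulVec_star_mulVec (h w : n → 𝕜) :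
    star h ⬝ᵥ vecMulVec w (star w) *ᵥ h = ((‖star h ⬝ᵥ w‖ ^ 2 : ℝ) : 𝕜) := by
  rw [dotProduct_vecMulVec_mulVec, star_dotProduct w h, RCLike.star_def, RCLike.mul_conj,
    RCLike.ofReal_pow]

theorem norm_star_dotProduct_sq_le (u x : n → 𝕜) :
    ‖star u ⬝ᵥ x‖ ^ 2 ≤ (∑ i, ‖u i‖ ^ 2) * ∑ i, ‖x i‖ ^ 2 := by
  have h := norm_inner_le_norm (𝕜 := 𝕜) (WithLp.toLp 2 u) (WithLp.toLp 2 x)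
  rw [EuclideanSpace.inner_toLp_toLp, dotProduct_comm] at h
  calc ‖star u ⬝ᵥ x‖ ^ 2 ≤ (‖WithLp.toLp 2 u‖ * ‖WithLp.toLp 2 x‖) ^ 2 := by gcongr
    _ = _ := by rw [mul_pow, EuclideanSpace.norm_sq_eq, EuclideanSpace.norm_sq_eq]

theorem PosSemidef.exists_eq_vecMulVec_star_of_rank_le_one [DecidableEq n] {A : Matrix n n 𝕜}
    (hA : A.PosSemidef) (hrank : A.rank ≤ 1) : ∃ v : n → 𝕜, A = vecMulVec v (star v) := by
  set ev := hA.isHermitian.eigenvalues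
  have single_support : ∀ i j, ev i ≠ 0 → ev j ≠ 0 → i = j := by
    rw [hA.isHermitian.rank_eq_card_non_zero_eigs, Fintype.card_le_one_iff] at hrank
    exact fun i j hi hj => congrArg Subtype.val (hrank ⟨i, hi⟩ ⟨j, hj⟩)
  -- `diagonal ev` has at most one nonzero entry, so it is `d dᴴ` for `d = √ev`.
  let d : n → 𝕜 := fun i => (√(ev i) : 𝕜)
  have hdiag : diagonal (RCLike.ofReal ∘ ev) = vecMulVec d (star d) := by
    ext i j
    rcases eq_or_ne i j with rfl | hij
    · rw [diagonal_apply_eq, vecMulVec_apply, Pi.star_apply, RCLike.star_def, RCLike.conj_ofReal,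
        ← RCLike.ofReal_mul, Real.mul_self_sqrt (hA.eigenvalues_nonneg i)]
      rfl
    · rw [diagonal_apply_ne _ hij, vecMulVec_apply]
      by_cases hi : ev i = 0
      · simp [d, hi]
      · simp [d, of_not_not (mt (single_support i j hi) hij)]
  refine ⟨hA.isHermitian.eigenvectorUnitary *ᵥ d, ?_⟩
  conv_lhs => rw [hA.isHermitian.spectral_theorem, hdiag]
  rw [Unitary.conjStarAlgAut_apply, star_eq_conjTranspose, mul_vecMulVec_star_mul_conjTranspose]

theorem posSemidef_smul_one_sub_vecMulVec_star_iff [DecidableEq n] {r : ℝ} (hr : 0 ≤ r)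
    (u : n → ℂ) :
    ((r : ℂ) • (1 : Matrix n n ℂ) - vecMulVec u (star u)).PosSemidef ↔
      ∑ i, ‖u i‖ ^ 2 ≤ r := by
  have quadratic_form (x : n → ℂ) :
      star x ⬝ᵥ ((r : ℂ) • (1 : Matrix n n ℂ) - vecMulVec u (star u)) *ᵥ x
        = ((r * ∑ i, ‖x i‖ ^ 2 - ‖star x ⬝ᵥ u‖ ^ 2 : ℝ) : ℂ) := by
    rw [sub_mulVec, dotProduct_sub, smul_mulVec, one_mulVec, dotProduct_smul,
      star_dotProduct_self_eq_sum_norm_sq, star_dotProduct_vecMulVec_star_mulVec, smul_eq_mul,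
      RCLike.ofReal_eq_complex_ofReal]
    push_cast
    ring
  constructor
  · intro hpsd
    have h := hpsd.dotProduct_mulVec_nonneg u
    rw [quadratic_form, Complex.zero_le_real, star_dotProduct_self_eq_sum_norm_sq,
      RCLike.ofReal_eq_complex_ofReal, Complex.norm_real, Real.norm_of_nonneg (by positivity)] at h
    nlinarith [show 0 ≤ ∑ i, ‖u i‖ ^ 2 by positivity]
  · intro hu
    refine .of_dotProduct_mulVec_nonneg ?_ fun x => ?_
    · exact (isHermitian_one.smul (Complex.conj_ofReal r)).sub
        (posSemidef_vecMulVec_self_star u).isHermitian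
    · rw [quadratic_form, Complex.zero_le_real, sub_nonneg]
      calc ‖star x ⬝ᵥ u‖ ^ 2 ≤ (∑ i, ‖x i‖ ^ 2) * ∑ i, ‖u i‖ ^ 2 := norm_star_dotProduct_sq_le x u
        _ ≤ r * ∑ i, ‖x i‖ ^ 2 := by rw [mul_comm]; gcongr

theorem det_one_add_smul_vecMulVec_star_le_iff [DecidableEq n] {σ κ : ℝ} (hσ : 0 < σ)
    (hκ : 0 ≤ κ) (u : n → ℂ) :
    (1 + ((σ⁻¹ : ℝ) : ℂ) • vecMulVec u (star u)).det ≤ ((1 + κ : ℝ) : ℂ) ↔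
      (((σ * κ : ℝ) : ℂ) • (1 : Matrix n n ℂ) - vecMulVec u (star u)).PosSemidef := by
  rw [posSemidef_smul_one_sub_vecMulVec_star_iff (by positivity), ← smul_vecMulVec,
    det_one_add_vecMulVec, dotProduct_smul, star_dotProduct_self_eq_sum_norm_sq, smul_eq_mul,
    RCLike.ofReal_eq_complex_ofReal, ← Complex.ofReal_mul, ← Complex.ofReal_one,
    ← Complex.ofReal_add, Complex.real_le_real, add_le_add_iff_left, inv_mul_le_iff₀ hσ]

end Matrix

theorem r1Feasible_outerProd_iff {n Ne : ℕ} {M S : Type*} [Fintype M] [Fintype S] [DecidableEq S]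
    {Λ : M → Matrix (Fin n) (Fin n) ℂ} {P : M → ℝ} {q : M → S → ℝ}
    {hch : S → Fin n → ℂ} {G : Matrix (Fin n) (Fin Ne) ℂ}
    {σ2 σe2 : ℝ} {κreq κtol : S → ℝ} (hσe2 : 0 < σe2) (hκtol : ∀ ρ, 0 ≤ κtol ρ)
    (w : S → Fin n → ℂ) :
    R1Feasible Λ P q hch G σ2 σe2 κreq κtol (fun ρ => outerProd (w ρ)) ↔
      R0Feasible Λ P q hch G σ2 σe2 κreq κtol w := by
  have hG (u : Fin n → ℂ) :
      Gᴴ * vecMulVec u (star u) * G = vecMulVec (Gᴴ *ᵥ u) (star (Gᴴ *ᵥ u)) := by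
    simpa only [conjTranspose_conjTranspose] using mul_vecMulVec_star_mul_conjTranspose Gᴴ u
  simp only [R1Feasible, R0Feasible, outerProd, posSemidef_vecMulVec_self_star, implies_true,
    true_and, trace_mul_vecMulVec, star_dotProduct_vecMulVec_star_mulVec,
    RCLike.ofReal_eq_complex_ofReal, Complex.ofReal_re, hG,
    det_one_add_smul_vecMulVec_star_le_iff hσe2 (hκtol _)]

theorem sdp_relaxation_tight_general {M S : Type*} [Fintype M] [Fintype S] [DecidableEq S]
    (Ne n : ℕ)
    (Λ : M → Matrix (Fin n) (Fin n) ℂ) (P : M → ℝ) (q : M → S → ℝ)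
    (hch : S → Fin n → ℂ) (G : Matrix (Fin n) (Fin Ne) ℂ)
    (σ2 σe2 : ℝ) (κreq κtol : S → ℝ)
    (hσe2 : 0 < σe2)
    (hκtol : ∀ ρ, 0 ≤ κtol ρ)
    (Wstar : S → Matrix (Fin n) (Fin n) ℂ)
    (hWstar : R1Feasible Λ P q hch G σ2 σe2 κreq κtol Wstar)
    (hrank : ∀ ρ : S, (Wstar ρ).rank ≤ 1)
    (hopt : ∀ W : S → Matrix (Fin n) (Fin n) ℂ,
        R1Feasible Λ P q hch G σ2 σe2 κreq κtol W →
        ∑ ρ : S, ((Wstar ρ).trace).re ≤ ∑ ρ : S, ((W ρ).trace).re) :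
    (∃ w : S → Fin n → ℂ, R0Feasible Λ P q hch G σ2 σe2 κreq κtol w) ∧
      sInf {p : ℝ | ∃ w : S → Fin n → ℂ,
          R0Feasible Λ P q hch G σ2 σe2 κreq κtol w ∧
          p = ∑ ρ : S, ∑ i : Fin n, ‖w ρ i‖ ^ 2} = ∑ ρ : S, ((Wstar ρ).trace).re ∧
      sInf {p : ℝ | ∃ W : S → Matrix (Fin n) (Fin n) ℂ,
          R1Feasible Λ P q hch G σ2 σe2 κreq κtol W ∧
          p = ∑ ρ : S, ((W ρ).trace).re} = ∑ ρ : S, ((Wstar ρ).trace).re := by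
  choose w hw using fun ρ => (hWstar.1 ρ).exists_eq_vecMulVec_star_of_rank_le_one (hrank ρ)
  obtain rfl : Wstar = fun ρ => outerProd (w ρ) := funext hw
  have power_eq (v : S → Fin n → ℂ) :
      ∑ ρ, (outerProd (v ρ)).trace.re = ∑ ρ, ∑ i, ‖v ρ i‖ ^ 2 := by
    simp only [outerProd, trace_vecMulVec_star, RCLike.ofReal_eq_complex_ofReal,
      Complex.ofReal_re]
  have hR0 := (r1Feasible_outerProd_iff hσe2 hκtol w).1 hWstar
  refine ⟨⟨w, hR0⟩, IsLeast.csInf_eq ⟨⟨w, hR0, power_eq w⟩, ?_⟩,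
    IsLeast.csInf_eq ⟨⟨_, hWstar, rfl⟩, ?_⟩⟩
  · rintro _ ⟨w', hw', rfl⟩
    exact power_eq w' ▸ hopt _ ((r1Feasible_outerProd_iff hσe2 hκtol w').2 hw')
  · rintro _ ⟨W, hW, rfl⟩
    exact hopt W hW

/-- Tightness of the semidefinite relaxation: if some R1-optimal family
`(W*_ρ)` has `rank W*_ρ ≤ 1` for all `ρ`, then R0 is feasible, and the
infimum of the total transmit power `Σ_ρ ‖w_ρ‖²` over R0-feasible families
equals `Σ_ρ tr W*_ρ`, which is also the infimum of `Σ_ρ tr W_ρ` over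
R1-feasible families. -/
theorem sdp_relaxation_tight {M S : Type*} [Fintype M] [Fintype S] [DecidableEq S]
    (Nt Ne n : ℕ) (hNt : 0 < Nt) (hNe : 0 < Ne) (hn : n = Fintype.card M * Nt)
    (Λ : M → Matrix (Fin n) (Fin n) ℂ) (P : M → ℝ) (q : M → S → ℝ)
    (hch : S → Fin n → ℂ) (G : Matrix (Fin n) (Fin Ne) ℂ)
    (σ2 σe2 : ℝ) (κreq κtol : S → ℝ)
    (hΛdiag : ∀ m, ∀ i j : Fin n, i ≠ j → Λ m i j = 0)
    (hΛ01 : ∀ m, ∀ i : Fin n, Λ m i i = 0 ∨ Λ m i i = 1)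
    (hΛsum : ∑ m : M, Λ m = 1)
    (hP : ∀ m, 0 < P m) (hq : ∀ m ρ, q m ρ = 0 ∨ q m ρ = 1)
    (hσ2 : 0 < σ2) (hσe2 : 0 < σe2)
    (hκreq : ∀ ρ, 0 < κreq ρ) (hκtol : ∀ ρ, 0 ≤ κtol ρ)
    (Wstar : S → Matrix (Fin n) (Fin n) ℂ)
    (hWstar : R1Feasible Λ P q hch G σ2 σe2 κreq κtol Wstar)
    (hrank : ∀ ρ : S, (Wstar ρ).rank ≤ 1)
    (hopt : ∀ W : S → Matrix (Fin n) (Fin n) ℂ,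
        R1Feasible Λ P q hch G σ2 σe2 κreq κtol W →
        ∑ ρ : S, ((Wstar ρ).trace).re ≤ ∑ ρ : S, ((W ρ).trace).re) :
    (∃ w : S → Fin n → ℂ, R0Feasible Λ P q hch G σ2 σe2 κreq κtol w) ∧
      sInf {p : ℝ | ∃ w : S → Fin n → ℂ,
          R0Feasible Λ P q hch G σ2 σe2 κreq κtol w ∧
          p = ∑ ρ : S, ∑ i : Fin n, ‖w ρ i‖ ^ 2} = ∑ ρ : S, ((Wstar ρ).trace).re ∧
      sInf {p : ℝ | ∃ W : S → Matrix (Fin n) (Fin n) ℂ,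
          R1Feasible Λ P q hch G σ2 σe2 κreq κtol W ∧
          p = ∑ ρ : S, ((W ρ).trace).re} = ∑ ρ : S, ((Wstar ρ).trace).re :=
  sdp_relaxation_tight_general Ne n Λ P q hch G σ2 σe2 κreq κtol hσe2 hκtol Wstar hWstar hrank hopt
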